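/- Suppose η ∈ W with η(·,0) = 0, η_s ∈ W, w ∈ H¹₀(0,L), f⁶ ∈ W, λ ∈ ℝ, and iλη + η_s - w = f⁶ in W. Then the Gurtin–Pipkin coupling estimate holds: (g(0)/2)∫₀^L|w_x|² dx ≤ 2|λ|²∫₀^L∫₀^∞σ(s)|η_x|² ds dx + (σ(0)/g(0))∫₀^L∫₀^∞(-σ'(s))|η_x|² ds dx + 2∫₀^L∫₀^∞σ(s)|f⁶_x|² ds dx. -/

import Mathlib

/-! Integrating the memory equation `iλη + η_s - w = f` against `σ` over `s > 0` gives, for each `x`,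
`g(0) w = iλ ∫ σ η + ∫ σ η_s - ∫ σ f`. Integration by parts turns `∫ σ η_s` into `∫ (-σ') η`:
the boundary term vanishes at `0` because `η(0) = 0`, and at `∞` because `σ η` is integrable with
integrable derivative. Weighted Cauchy–Schwarz bounds the three integrals by `g(0) ∫ σ |η|²`,
`σ(0) ∫ (-σ') |η|²` (as `σ ≥ 0` decreases, `∫ (-σ') ≤ σ(0)`) and `g(0) ∫ σ |f|²`, and Young's
inequality `(a + b + c)² ≤ 4a² + 2b² + 4c²` gives the estimate for each `x`, which is then
integrated over `(0, L)`. -/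

open MeasureTheory Set Filter Topology

section CauchySchwarz

variable {α : Type*} [MeasurableSpace α] {μ : Measure α}

theorem integrable_mul_of_integrable_mul_sq {w h : α → ℝ} (hw : 0 ≤ᵐ[μ] w)
    (hwi : Integrable w μ) (hwh : Integrable (fun a => w a * h a ^ 2) μ)
    (hh : AEStronglyMeasurable h μ) : Integrable (fun a => w a * h a) μ := by
  refine ((hwi.add hwh).div_const 2).mono' (hwi.1.mul hh) ?_
  filter_upwards [hw] with a ha
  have habs : w a * |h a| ^ 2 = w a * h a ^ 2 := by rw [sq_abs]
  rw [Real.norm_eq_abs, abs_mul, abs_of_nonneg ha, Pi.add_apply]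
  nlinarith [mul_nonneg ha (sq_nonneg (|h a| - 1))]

theorem sq_integral_mul_le {w h : α → ℝ} (hw : 0 ≤ᵐ[μ] w) (hwi : Integrable w μ)
    (hwh : Integrable (fun a => w a * h a ^ 2) μ) (hh : AEStronglyMeasurable h μ) :
    (∫ a, w a * h a ∂μ) ^ 2 ≤ (∫ a, w a ∂μ) * ∫ a, w a * h a ^ 2 ∂μ := by
  have hwh₁ := integrable_mul_of_integrable_mul_sq hw hwi hwh hh
  have hquad : ∀ t : ℝ, 0 ≤ (∫ a, w a * h a ^ 2 ∂μ) * (t * t)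
      + (-2 * ∫ a, w a * h a ∂μ) * t + ∫ a, w a ∂μ := by
    intro t
    have hexpand : (fun a => w a * (t * h a - 1) ^ 2)
        = fun a => (t * t) * (w a * h a ^ 2) + (-2 * t) * (w a * h a) + w a := by
      ext a; ring
    have hnonneg : 0 ≤ ∫ a, w a * (t * h a - 1) ^ 2 ∂μ :=
      integral_nonneg_of_ae (hw.mono fun a ha => mul_nonneg ha (sq_nonneg _))
    rw [hexpand, integral_add _ hwi, integral_add (hwh.const_mul _) (hwh₁.const_mul _),
      integral_const_mul, integral_const_mul] at hnonneg
    · linarith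
    · exact (hwh.const_mul _).add (hwh₁.const_mul _)
  have := discrim_le_zero hquad
  rw [discrim] at this
  linarith

variable {E : Type*} [NormedAddCommGroup E] [NormedSpace ℝ E]

theorem integrable_smul_of_integrable_mul_norm_sq {w : α → ℝ} {g : α → E} (hw : 0 ≤ᵐ[μ] w)
    (hwi : Integrable w μ) (hwg : Integrable (fun a => w a * ‖g a‖ ^ 2) μ)
    (hg : AEStronglyMeasurable g μ) : Integrable (fun a => w a • g a) μ := by
  refine (integrable_mul_of_integrable_mul_sq hw hwi hwg hg.norm).mono' (hwi.1.smul hg) ?_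
  filter_upwards [hw] with a ha
  rw [norm_smul, Real.norm_eq_abs, abs_of_nonneg ha]

theorem norm_integral_smul_sq_le {w : α → ℝ} {g : α → E} (hw : 0 ≤ᵐ[μ] w)
    (hwi : Integrable w μ) (hwg : Integrable (fun a => w a * ‖g a‖ ^ 2) μ)
    (hg : AEStronglyMeasurable g μ) :
    ‖∫ a, w a • g a ∂μ‖ ^ 2 ≤ (∫ a, w a ∂μ) * ∫ a, w a * ‖g a‖ ^ 2 ∂μ := by
  have hnorm : ‖∫ a, w a • g a ∂μ‖ ≤ ∫ a, w a * ‖g a‖ ∂μ := by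
    refine (norm_integral_le_integral_norm _).trans_eq (integral_congr_ae ?_)
    filter_upwards [hw] with a ha
    rw [norm_smul, Real.norm_eq_abs, abs_of_nonneg ha]
  calc ‖∫ a, w a • g a ∂μ‖ ^ 2 ≤ (∫ a, w a * ‖g a‖ ∂μ) ^ 2 :=
        pow_le_pow_left₀ (norm_nonneg _) hnorm 2
    _ ≤ _ := sq_integral_mul_le hw hwi hwg hg.norm

end CauchySchwarz

theorem exists_tendsto_atTop_of_antitoneOn_Ioi {f : ℝ → ℝ} {a : ℝ} (hf : AntitoneOn f (Ioi a))
    (hb : BddBelow (f '' Ioi a)) : ∃ l, Tendsto f atTop (𝓝 l) := by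
  have hmem : ∀ t, max t (a + 1) ∈ Ioi a := fun t => (lt_add_one a).trans_le (le_max_right _ _)
  have hanti : Antitone fun t => f (max t (a + 1)) := fun s t hst =>
    hf (hmem s) (hmem t) (max_le_max hst le_rfl)
  have hbdd : BddBelow (range fun t => f (max t (a + 1))) :=
    hb.mono (range_subset_iff.2 fun t => mem_image_of_mem f (hmem t))
  refine ⟨_, (tendsto_atTop_ciInf hanti hbdd).congr' ?_⟩
  filter_upwards [eventually_ge_atTop (a + 1)] with t ht
  rw [max_eq_left ht]

theorem integrableOn_Ioi_deriv_and_integral_neg_le {g g' : ℝ → ℝ} {a ga : ℝ}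
    (hderiv : ∀ x ∈ Ioi a, HasDerivAt g (g' x) x) (hg' : ∀ x ∈ Ioi a, g' x ≤ 0)
    (hg : ∀ x ∈ Ioi a, 0 ≤ g x) (ha : Tendsto g (𝓝[>] a) (𝓝 ga)) :
    IntegrableOn g' (Ioi a) ∧ ∫ x in Ioi a, -g' x ≤ ga := by
  have hanti : AntitoneOn g (Ioi a) := by
    refine antitoneOn_of_hasDerivWithinAt_nonpos (f' := g') (convex_Ioi a)
      (fun x hx => (hderiv x hx).continuousAt.continuousWithinAt) ?_ ?_ <;>
    rw [interior_Ioi]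
    · exact fun x hx => (hderiv x hx).hasDerivWithinAt
    · exact hg'
  obtain ⟨l, hl⟩ := exists_tendsto_atTop_of_antitoneOn_Ioi hanti
    ⟨0, forall_mem_image.2 hg⟩
  have hl₀ : 0 ≤ l := ge_of_tendsto hl ((eventually_gt_atTop a).mono hg)
  -- Redefining `g` at `a` makes it continuous on `[a, ∞)`, as the improper FTC requires.
  set G := Function.update g a ga
  have hGa : ContinuousWithinAt G (Ici a) a := by
    rw [continuousWithinAt_update_same, Ici_sdiff_left]
    exact ha
  have hGd : ∀ x ∈ Ioi a, HasDerivAt G (g' x) x := fun x hx =>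
    (hderiv x hx).congr_of_eventuallyEq <|
      (eventually_ne_nhds (ne_of_gt hx)).mono fun y hy => Function.update_of_ne hy _ _
  have hGl : Tendsto G atTop (𝓝 l) :=
    hl.congr' <| (eventually_ne_atTop a).mono fun y hy => (Function.update_of_ne hy _ _).symm
  refine ⟨integrableOn_Ioi_deriv_of_nonpos hGa hGd hg' hGl, ?_⟩
  rw [integral_neg, integral_Ioi_of_hasDerivAt_of_nonpos hGa hGd hg' hGl,
    show G a = ga from Function.update_self ..]
  linarith

theorem integral_Ioi_mul_deriv_eq_neg_deriv_mul {A : Type*} [NormedRing A] [NormedAlgebra ℝ A]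
    [CompleteSpace A] {u v u' v' : ℝ → A} {a : ℝ}
    (hu : ∀ x ∈ Ioi a, HasDerivAt u (u' x) x) (hv : ∀ x ∈ Ioi a, HasDerivAt v (v' x) x)
    (huv' : IntegrableOn (u * v') (Ioi a)) (hu'v : IntegrableOn (u' * v) (Ioi a))
    (huv : IntegrableOn (u * v) (Ioi a)) (h_zero : Tendsto (u * v) (𝓝[>] a) (𝓝 0)) :
    ∫ x in Ioi a, u x * v' x = -∫ x in Ioi a, u' x * v x := by
  have h_infty : Tendsto (u * v) atTop (𝓝 0) :=
    tendsto_zero_of_hasDerivAt_of_integrableOn_Ioi (fun x hx => (hu x hx).mul (hv x hx))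
      (hu'v.add huv') huv
  rw [integral_Ioi_mul_deriv_eq_deriv_mul hu hv huv' hu'v h_zero h_infty, sub_zero, zero_sub]

theorem half_mul_sq_le_of_mul_le_add {g₀ σ₀ lam A B C W p q r : ℝ} (hg₀ : 0 < g₀) (hW : 0 ≤ W)
    (h : g₀ * W ≤ |lam| * p + q + r)
    (hpA : p ^ 2 ≤ g₀ * A) (hqB : q ^ 2 ≤ σ₀ * B) (hrC : r ^ 2 ≤ g₀ * C) :
    g₀ / 2 * W ^ 2 ≤ 2 * lam ^ 2 * A + σ₀ / g₀ * B + 2 * C := by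
  have hsq : (g₀ * W) ^ 2 ≤ (|lam| * p + q + r) ^ 2 := pow_le_pow_left₀ (by positivity) h 2
  have hyoung : (|lam| * p + q + r) ^ 2 ≤ 4 * lam ^ 2 * p ^ 2 + 2 * q ^ 2 + 4 * r ^ 2 := by
    nlinarith [sq_nonneg (|lam| * p - r), sq_nonneg (|lam| * p + r - q), sq_abs lam]
  have hpA' := mul_le_mul_of_nonneg_left hpA (sq_nonneg lam)
  have hB : σ₀ / g₀ * B = σ₀ * B / g₀ := div_mul_eq_mul_div _ _ _
  rw [hB, ← sub_nonneg]
  have key : 2 * lam ^ 2 * A + σ₀ * B / g₀ + 2 * C - g₀ / 2 * W ^ 2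
      = (4 * lam ^ 2 * (g₀ * A) + 2 * (σ₀ * B) + 4 * (g₀ * C) - (g₀ * W) ^ 2) / (2 * g₀) := by
    field_simp
    ring
  rw [key]
  apply div_nonneg _ (by positivity)
  nlinarith

theorem IntegrableOn.integrable_prod_restrict {α β E : Type*} [MeasurableSpace α]
    [MeasurableSpace β] [NormedAddCommGroup E] {μ : Measure α} {ν : Measure β} [SFinite μ]
    [SFinite ν] {F : α × β → E} {s : Set α} {t : Set β} (h : IntegrableOn F (s ×ˢ t) (μ.prod ν)) :
    Integrable F ((μ.restrict s).prod (ν.restrict t)) := by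
  rwa [Measure.prod_restrict]

theorem integral_smul_eq_of_memory_equation {σ σ' : ℝ → ℝ} {σ₀ lam : ℝ} {η ηs f : ℝ → ℂ} {w : ℂ}
    (hσint : IntegrableOn σ (Ioi 0)) (hσderiv : ∀ s ∈ Ioi (0:ℝ), HasDerivAt σ (σ' s) s)
    (hσ₀ : Tendsto σ (𝓝[>] 0) (𝓝 σ₀)) (hη₀ : Tendsto η (𝓝[>] 0) (𝓝 0))
    (hηs : ∀ s ∈ Ioi (0:ℝ), HasDerivAt η (ηs s) s)
    (heq : ∀ s ∈ Ioi (0:ℝ), Complex.I * lam * η s + ηs s - w = f s)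
    (hση : IntegrableOn (fun s => σ s • η s) (Ioi 0))
    (hσ'η : IntegrableOn (fun s => (-σ' s) • η s) (Ioi 0))
    (hσf : IntegrableOn (fun s => σ s • f s) (Ioi 0)) :
    (∫ s in Ioi (0:ℝ), σ s) • w = Complex.I * lam * (∫ s in Ioi (0:ℝ), σ s • η s)
      + (∫ s in Ioi (0:ℝ), (-σ' s) • η s) - ∫ s in Ioi (0:ℝ), σ s • f s := by
  have hmem := ae_restrict_mem (μ := volume) (measurableSet_Ioi (a := (0:ℝ)))
  have hσηs : IntegrableOn (fun s => σ s • ηs s) (Ioi 0) := by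
    refine (((hσint.smul_const w).add hσf).sub (hση.const_mul (Complex.I * lam))).congr ?_
    filter_upwards [hmem] with s hs
    simp only [Pi.add_apply, Pi.sub_apply, ← heq s hs, Complex.real_smul]
    ring
  have hparts : ∫ s in Ioi (0:ℝ), σ s • ηs s = ∫ s in Ioi (0:ℝ), (-σ' s) • η s := by
    have hσηs' : IntegrableOn ((fun s => (σ s : ℂ)) * ηs) (Ioi 0) :=
      hσηs.congr_fun (fun s _ => Complex.real_smul) measurableSet_Ioi
    have hσ'η' : IntegrableOn ((fun s => (σ' s : ℂ)) * η) (Ioi 0) :=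
      hσ'η.neg.congr_fun (fun s _ => by simp [Complex.real_smul]) measurableSet_Ioi
    have hση' : IntegrableOn ((fun s => (σ s : ℂ)) * η) (Ioi 0) :=
      hση.congr_fun (fun s _ => Complex.real_smul) measurableSet_Ioi
    have hzero : Tendsto (fun s => (σ s : ℂ) * η s) (𝓝[>] 0) (𝓝 0) := by
      simpa using ((Complex.continuous_ofReal.tendsto σ₀).comp hσ₀).mul hη₀
    simp only [Complex.real_smul]
    rw [integral_Ioi_mul_deriv_eq_neg_deriv_mul (fun s hs => (hσderiv s hs).ofReal_comp) hηs
      hσηs' hσ'η' hση' hzero, ← integral_neg]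
    simp
  have hsplit : ∫ s in Ioi (0:ℝ), σ s • w
      = ∫ s in Ioi (0:ℝ), Complex.I * lam * (σ s • η s) + σ s • ηs s - σ s • f s := by
    refine integral_congr_ae ?_
    filter_upwards [hmem] with s hs
    simp only [← heq s hs, Complex.real_smul]
    ring
  have hsum : IntegrableOn (fun s => Complex.I * lam * (σ s • η s) + σ s • ηs s) (Ioi 0) :=
    (hση.const_mul _).add hσηs
  rw [← integral_smul_const, hsplit, integral_sub hsum hσf,
    integral_add (hση.const_mul _) hσηs, integral_const_mul, hparts]

theorem memory_coupling_estimate {σ σ' : ℝ → ℝ} {g₀ σ₀ lam : ℝ}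
    (hσ : ∀ s ∈ Ioi (0:ℝ), 0 ≤ σ s) (hσint : IntegrableOn σ (Ioi 0))
    (hσderiv : ∀ s ∈ Ioi (0:ℝ), HasDerivAt σ (σ' s) s) (hσ'neg : ∀ s ∈ Ioi (0:ℝ), σ' s ≤ 0)
    (hσ'int : IntegrableOn σ' (Ioi 0)) (hσ'sum : ∫ s in Ioi (0:ℝ), -σ' s ≤ σ₀)
    (hσ₀ : Tendsto σ (𝓝[>] 0) (𝓝 σ₀)) (hg₀ : g₀ = ∫ s in Ioi (0:ℝ), σ s) (hg₀pos : 0 < g₀)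
    {η ηs f : ℝ → ℂ} {w : ℂ} (hη₀ : η 0 = 0) (hηs : ∀ s, HasDerivAt η (ηs s) s)
    (heq : ∀ s ∈ Ioi (0:ℝ), Complex.I * lam * η s + ηs s - w = f s)
    (hA : IntegrableOn (fun s => σ s * ‖η s‖ ^ 2) (Ioi 0))
    (hB : IntegrableOn (fun s => (-σ' s) * ‖η s‖ ^ 2) (Ioi 0))
    (hC : IntegrableOn (fun s => σ s * ‖f s‖ ^ 2) (Ioi 0)) :
    g₀ / 2 * ‖w‖ ^ 2 ≤ 2 * lam ^ 2 * (∫ s in Ioi (0:ℝ), σ s * ‖η s‖ ^ 2)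
      + σ₀ / g₀ * (∫ s in Ioi (0:ℝ), (-σ' s) * ‖η s‖ ^ 2)
      + 2 * ∫ s in Ioi (0:ℝ), σ s * ‖f s‖ ^ 2 := by
  have hmem := ae_restrict_mem (μ := volume) (measurableSet_Ioi (a := (0:ℝ)))
  have hσae : 0 ≤ᵐ[volume.restrict (Ioi 0)] σ := hmem.mono hσ
  have hσ'ae : 0 ≤ᵐ[volume.restrict (Ioi 0)] fun s => -σ' s :=
    hmem.mono fun s hs => neg_nonneg.2 (hσ'neg s hs)
  have hηc : Continuous η := continuous_iff_continuousAt.2 fun s => (hηs s).continuousAt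
  have hfm : AEStronglyMeasurable f (volume.restrict (Ioi 0)) := by
    have hηs_deriv : ηs = deriv η := funext fun s => (hηs s).deriv.symm
    refine AEStronglyMeasurable.congr ?_ (hmem.mono heq)
    rw [hηs_deriv]
    exact ((aestronglyMeasurable_const.mul hηc.aestronglyMeasurable).add
      (stronglyMeasurable_deriv η).aestronglyMeasurable).sub aestronglyMeasurable_const
  have hid := integral_smul_eq_of_memory_equation hσint hσderiv hσ₀
    (hη₀ ▸ hηc.continuousAt.tendsto.mono_left nhdsWithin_le_nhds) (fun s _ => hηs s) heq
    (integrable_smul_of_integrable_mul_norm_sq hσae hσint hA hηc.aestronglyMeasurable)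
    (integrable_smul_of_integrable_mul_norm_sq hσ'ae hσ'int.neg hB hηc.aestronglyMeasurable)
    (integrable_smul_of_integrable_mul_norm_sq hσae hσint hC hfm)
  have hBnonneg : 0 ≤ ∫ s in Ioi (0:ℝ), (-σ' s) * ‖η s‖ ^ 2 :=
    integral_nonneg_of_ae (hσ'ae.mono fun s hs => mul_nonneg hs (sq_nonneg _))
  refine half_mul_sq_le_of_mul_le_add hg₀pos (norm_nonneg w) ?_
    (hg₀ ▸ norm_integral_smul_sq_le hσae hσint hA hηc.aestronglyMeasurable)
    ((norm_integral_smul_sq_le hσ'ae hσ'int.neg hB hηc.aestronglyMeasurable).trans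
      (mul_le_mul_of_nonneg_right hσ'sum hBnonneg))
    (hg₀ ▸ norm_integral_smul_sq_le hσae hσint hC hfm)
  calc g₀ * ‖w‖ = ‖(∫ s in Ioi (0:ℝ), σ s) • w‖ := by
        rw [norm_smul, ← hg₀, Real.norm_of_nonneg hg₀pos.le]
    _ ≤ _ := by
      rw [hid]
      refine (norm_sub_le _ _).trans (add_le_add_left ((norm_add_le _ _).trans_eq ?_) _)
      simp

theorem gurtin_pipkin_coupling_general
    (L dσ g0 σ0 lam : ℝ) (hd : 0 < dσ)
    (σ σ' : ℝ → ℝ)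
    (hσ : ∀ s, 0 < s → 0 ≤ σ s)
    (hσint : IntegrableOn σ (Ioi 0))
    (hσderiv : ∀ s, 0 < s → HasDerivAt σ (σ' s) s)
    (hdaf : ∀ s, 0 < s → σ' s ≤ -dσ * σ s)
    (hσ0 : Tendsto σ (nhdsWithin 0 (Ioi 0)) (nhds σ0))
    (hg0 : g0 = ∫ s in Ioi (0:ℝ), σ s) (hg0pos : 0 < g0)
    (ηx ηsx : ℝ → ℝ → ℂ) (wx : ℝ → ℂ) (f6x : ℝ → ℝ → ℂ)
    (hηx0 : ∀ x, ηx x 0 = 0)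
    (hηs : ∀ x s, HasDerivAt (fun r => ηx x r) (ηsx x s) s)
    (heq : ∀ x ∈ Ioo (0:ℝ) L, ∀ s, 0 < s →
      Complex.I * (lam : ℂ) * ηx x s + ηsx x s - wx x = f6x x s)
    (hint1 : IntegrableOn (fun p : ℝ × ℝ => σ p.2 * ‖ηx p.1 p.2‖ ^ 2)
      (Ioo (0:ℝ) L ×ˢ Ioi (0:ℝ)))
    (hint2 : IntegrableOn (fun p : ℝ × ℝ => σ' p.2 * ‖ηx p.1 p.2‖ ^ 2)
      (Ioo (0:ℝ) L ×ˢ Ioi (0:ℝ)))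
    (hint3 : IntegrableOn (fun p : ℝ × ℝ => σ p.2 * ‖f6x p.1 p.2‖ ^ 2)
      (Ioo (0:ℝ) L ×ˢ Ioi (0:ℝ))) :
    (g0 / 2) * (∫ x in Ioo (0:ℝ) L, ‖wx x‖ ^ 2) ≤
      2 * lam ^ 2 * (∫ x in Ioo (0:ℝ) L, ∫ s in Ioi (0:ℝ), σ s * ‖ηx x s‖ ^ 2)
      + (σ0 / g0) * (∫ x in Ioo (0:ℝ) L, ∫ s in Ioi (0:ℝ), (-σ' s) * ‖ηx x s‖ ^ 2)
      + 2 * ∫ x in Ioo (0:ℝ) L, ∫ s in Ioi (0:ℝ), σ s * ‖f6x x s‖ ^ 2 := by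
  have hσ'neg : ∀ s ∈ Ioi (0:ℝ), σ' s ≤ 0 := fun s hs =>
    (hdaf s hs).trans (by nlinarith [hσ s hs])
  obtain ⟨hσ'int, hσ'sum⟩ := integrableOn_Ioi_deriv_and_integral_neg_le hσderiv hσ'neg hσ hσ0
  have hA := IntegrableOn.integrable_prod_restrict (μ := volume) (ν := volume) hint1
  have hint2' : IntegrableOn (fun p : ℝ × ℝ => (-σ' p.2) * ‖ηx p.1 p.2‖ ^ 2)
      (Ioo (0:ℝ) L ×ˢ Ioi (0:ℝ)) := by
    simp only [neg_mul]
    exact Integrable.fun_neg hint2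
  have hB := IntegrableOn.integrable_prod_restrict (μ := volume) (ν := volume) hint2'
  have hC := IntegrableOn.integrable_prod_restrict (μ := volume) (ν := volume) hint3
  have hslice : ∀ᵐ x ∂volume.restrict (Ioo 0 L), g0 / 2 * ‖wx x‖ ^ 2 ≤
      2 * lam ^ 2 * (∫ s in Ioi (0:ℝ), σ s * ‖ηx x s‖ ^ 2)
      + σ0 / g0 * (∫ s in Ioi (0:ℝ), (-σ' s) * ‖ηx x s‖ ^ 2)
      + 2 * ∫ s in Ioi (0:ℝ), σ s * ‖f6x x s‖ ^ 2 := by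
    filter_upwards [hA.prod_right_ae, hB.prod_right_ae, hC.prod_right_ae,
      ae_restrict_mem measurableSet_Ioo] with x hAx hBx hCx hx
    exact memory_coupling_estimate hσ hσint hσderiv hσ'neg hσ'int hσ'sum hσ0 hg0 hg0pos
      (hηx0 x) (hηs x) (heq x hx) hAx hBx hCx
  have hA' := hA.integral_prod_left.const_mul (2 * lam ^ 2)
  have hB' := hB.integral_prod_left.const_mul (σ0 / g0)
  have hC' := hC.integral_prod_left.const_mul 2
  have hAB := hA'.fun_add hB'
  rw [← integral_const_mul, ← integral_const_mul, ← integral_const_mul, ← integral_const_mul,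
    ← integral_add hA' hB', ← integral_add hAB hC']
  exact integral_mono_of_nonneg (ae_of_all _ fun x => by positivity) (hAB.fun_add hC') hslice

/-- the Gurtin–Pipkin coupling estimate. If `iλη + η_s - w = f⁶` in the
memory space (stated at the level of `x`-derivatives), `η(·,0) = 0`, and `σ` satisfies
hypothesis (H), then
`(g(0)/2)∫|w_x|² ≤ 2λ²∫∫σ|η_x|² + (σ(0)/g(0))∫∫(-σ')|η_x|² + 2∫∫σ|f⁶_x|²`. -/
theorem gurtin_pipkin_coupling
    (L dσ g0 σ0 lam : ℝ) (hL : 0 < L) (hd : 0 < dσ)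
    (σ σ' : ℝ → ℝ)
    (hσ : ∀ s, 0 < s → 0 ≤ σ s)
    (hσint : IntegrableOn σ (Ioi 0))
    (hσderiv : ∀ s, 0 < s → HasDerivAt σ (σ' s) s)
    (hdaf : ∀ s, 0 < s → σ' s ≤ -dσ * σ s)
    (hσ0 : Tendsto σ (nhdsWithin 0 (Ioi 0)) (nhds σ0))
    (hg0 : g0 = ∫ s in Ioi (0:ℝ), σ s) (hg0pos : 0 < g0)
    (ηx ηsx : ℝ → ℝ → ℂ) (wx : ℝ → ℂ) (f6x : ℝ → ℝ → ℂ)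
    (hηx0 : ∀ x, ηx x 0 = 0)
    (hηs : ∀ x s, HasDerivAt (fun r => ηx x r) (ηsx x s) s)
    (heq : ∀ x ∈ Ioo (0:ℝ) L, ∀ s, 0 < s →
      Complex.I * (lam : ℂ) * ηx x s + ηsx x s - wx x = f6x x s)
    (hint1 : IntegrableOn (fun p : ℝ × ℝ => σ p.2 * ‖ηx p.1 p.2‖ ^ 2)
      (Ioo (0:ℝ) L ×ˢ Ioi (0:ℝ)))
    (hint2 : IntegrableOn (fun p : ℝ × ℝ => σ' p.2 * ‖ηx p.1 p.2‖ ^ 2)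
      (Ioo (0:ℝ) L ×ˢ Ioi (0:ℝ)))
    (hint3 : IntegrableOn (fun p : ℝ × ℝ => σ p.2 * ‖f6x p.1 p.2‖ ^ 2)
      (Ioo (0:ℝ) L ×ˢ Ioi (0:ℝ)))
    (hintw : IntegrableOn (fun x => ‖wx x‖ ^ 2) (Ioo (0:ℝ) L)) :
    (g0 / 2) * (∫ x in Ioo (0:ℝ) L, ‖wx x‖ ^ 2) ≤
      2 * lam ^ 2 * (∫ x in Ioo (0:ℝ) L, ∫ s in Ioi (0:ℝ), σ s * ‖ηx x s‖ ^ 2)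
      + (σ0 / g0) * (∫ x in Ioo (0:ℝ) L, ∫ s in Ioi (0:ℝ), (-σ' s) * ‖ηx x s‖ ^ 2)
      + 2 * ∫ x in Ioo (0:ℝ) L, ∫ s in Ioi (0:ℝ), σ s * ‖f6x x s‖ ^ 2 :=
  gurtin_pipkin_coupling_general L dσ g0 σ0 lam hd σ σ' hσ hσint hσderiv hdaf hσ0 hg0 hg0pos ηx ηsx
    wx f6x hηx0 hηs heq hint1 hint2 hint3
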